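/- Let K be a field, let Ω be a field extension of K, and let E be a finite Galois intermediate field of Ω/K. Let s(E/K) denote the number of intermediate fields of E/K, and let r be a positive integer with r ≥ s(E/K). Let N₁, ..., N_r be finite intermediate fields of Ω/K that are linearly disjoint over K. Then there exists an index i ∈ {1, ..., r} such that N_i ∩ E = K. -/
import Mathlib

open Module IntermediateField

set_option maxHeartbeats 1000000 in
private theorem finrank_biSup_le_prod {K Ω : Type*} [Field K] [Field Ω] [Algebra K Ω]
    {ι : Type*} [DecidableEq ι] (N : ι → IntermediateField K Ω) (s : Finset ι) :
    Module.finrank K ↥(⨆ i ∈ s, N i) ≤ ∏ i ∈ s, Module.finrank K ↥(N i) := by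
  classical
  induction s using Finset.induction with
  | empty =>
    rw [show (⨆ i ∈ (∅ : Finset ι), N i) = ⊥ by simp, Finset.prod_empty]
    exact le_of_eq IntermediateField.finrank_bot
  | @insert a s ha ih =>
    rw [Finset.prod_insert ha, Finset.iSup_insert]
    calc Module.finrank K ↥(N a ⊔ ⨆ i ∈ s, N i)
        ≤ Module.finrank K ↥(N a) * Module.finrank K ↥(⨆ i ∈ s, N i) :=
          IntermediateField.finrank_sup_le _ _
      _ ≤ _ := Nat.mul_le_mul_left _ ih

/-- Let `E` be a finite Galois intermediate field of `Ω/K`. If `r ≥ s(E/K)`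
(the number of intermediate fields of `E/K`) and `N₁, …, N_r` are finite
intermediate fields of `Ω/K` that are linearly disjoint over `K` (that is, the
degree of their compositum is the product of their degrees), then there exists
`i` with `N_i ∩ E = K`. -/
theorem exists_inf_eq_bot_of_card_intermediateField_le
    (K Ω : Type*) [Field K] [Field Ω] [Algebra K Ω]
    (E : IntermediateField K Ω)
    [FiniteDimensional K ↥E] [IsGalois K ↥E]
    (r : ℕ) (hr : 0 < r)
    (hrs : Nat.card (IntermediateField K ↥E) ≤ r)
    (N : Fin r → IntermediateField K Ω)
    [∀ i, FiniteDimensional K ↥(N i)]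
    (hdisj : Module.finrank K ↥(⨆ i, N i) = ∏ i, Module.finrank K ↥(N i)) :
    ∃ i : Fin r, N i ⊓ E = ⊥ := by
  classical
  -- pairwise trivial intersections
  have key : ∀ i j : Fin r, i ≠ j → N i ⊓ N j = ⊥ := by
    intro i j hij
    have hsup : Module.finrank K ↥(N i ⊔ N j)
        = Module.finrank K ↥(N i) * Module.finrank K ↥(N j) := by
      set s : Finset (Fin r) := (Finset.univ.erase i).erase j with hs
      have hj : j ∈ Finset.univ.erase i := Finset.mem_erase.2 ⟨hij.symm, Finset.mem_univ j⟩
      have hje : j ∉ s := Finset.notMem_erase j _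
      have hie : i ∉ insert j s := by
        simp only [Finset.mem_insert, hs]
        rintro (h | h)
        · exact hij h
        · exact (Finset.mem_erase.1 (Finset.mem_erase.1 h).2).1 rfl
      have huniv : (Finset.univ : Finset (Fin r)) = insert i (insert j s) := by
        rw [hs, Finset.insert_erase hj, Finset.insert_erase (Finset.mem_univ i)]
      have hP : 0 < ∏ k ∈ s, Module.finrank K ↥(N k) :=
        Finset.prod_pos fun k _ => Module.finrank_pos
      have hsupeq : (⨆ k, N k) = (N i ⊔ N j) ⊔ ⨆ k ∈ s, N k := by
        refine le_antisymm (iSup_le fun k => ?_)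
          (sup_le (sup_le (le_iSup N i) (le_iSup N j))
            (iSup_le fun k => iSup_le fun _ => le_iSup N k))
        by_cases hki : k = i
        · subst hki; exact le_sup_of_le_left le_sup_left
        by_cases hkj : k = j
        · subst hkj; exact le_sup_of_le_left le_sup_right
        · exact le_sup_of_le_right (le_trans (le_iSup₂ (f := fun k _ => N k) k
            (by simp [hs, hki, hkj])) le_rfl)
      have hle : Module.finrank K ↥(⨆ k, N k)
          ≤ Module.finrank K ↥(N i ⊔ N j) * ∏ k ∈ s, Module.finrank K ↥(N k) := by
        rw [hsupeq]
        calc Module.finrank K ↥((N i ⊔ N j) ⊔ ⨆ k ∈ s, N k)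
            ≤ Module.finrank K ↥(N i ⊔ N j) * Module.finrank K ↥(⨆ k ∈ s, N k) :=
              IntermediateField.finrank_sup_le _ _
          _ ≤ _ := Nat.mul_le_mul_left _ (finrank_biSup_le_prod N s)
      have hprod : (∏ k, Module.finrank K ↥(N k))
          = Module.finrank K ↥(N i) * Module.finrank K ↥(N j)
            * ∏ k ∈ s, Module.finrank K ↥(N k) := by
        rw [huniv, Finset.prod_insert hie, Finset.prod_insert hje, mul_assoc]
      have hge : Module.finrank K ↥(N i) * Module.finrank K ↥(N j)
          ≤ Module.finrank K ↥(N i ⊔ N j) := by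
        have := hle
        rw [hdisj, hprod] at this
        exact Nat.le_of_mul_le_mul_right this hP
      exact le_antisymm (IntermediateField.finrank_sup_le _ _) hge
    exact (IntermediateField.LinearDisjoint.of_finrank_sup hsup).inf_eq_bot
  -- finitely many intermediate fields of E/K
  haveI : Finite (IntermediateField K ↥E) :=
    Field.finite_intermediateField_of_exists_primitive_element K ↥E
      (Field.exists_primitive_element K ↥E)
  by_contra hcon
  push_neg at hcon
  -- map each N i ⊓ E to an intermediate field of E/K
  set f : Fin r → {F : IntermediateField K ↥E // F ≠ ⊥} := fun i =>
    ⟨(N i ⊓ E).comap E.val, by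
      intro hbot
      apply hcon i
      have hle : N i ⊓ E ≤ E.val.fieldRange := by
        rw [E.fieldRange_val]; exact inf_le_right
      have := IntermediateField.map_comap_eq_self hle
      rw [hbot] at this
      rw [← this, IntermediateField.map_bot]⟩ with hf
  have hfinj : Function.Injective f := by
    intro i j hijf
    by_contra hij
    have h1 : N i ⊓ E = N j ⊓ E := by
      have hle : ∀ k, N k ⊓ E ≤ E.val.fieldRange := by
        intro k; rw [E.fieldRange_val]; exact inf_le_right
      have := congrArg (fun F : {F : IntermediateField K ↥E // F ≠ ⊥} =>
        IntermediateField.map E.val F.1) hijf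
      simpa [hf, IntermediateField.map_comap_eq_self (hle i),
        IntermediateField.map_comap_eq_self (hle j)] using this
    have h2 : N i ⊓ E ≤ N i ⊓ N j := le_inf inf_le_left (h1.le.trans inf_le_left)
    rw [key i j hij] at h2
    exact hcon i (le_antisymm h2 bot_le)
  have hcard : r ≤ Nat.card {F : IntermediateField K ↥E // F ≠ ⊥} := by
    simpa using Nat.card_le_card_of_injective f hfinj
  have hlt : Nat.card {F : IntermediateField K ↥E // F ≠ ⊥}
      < Nat.card (IntermediateField K ↥E) := by
    haveI := Fintype.ofFinite (IntermediateField K ↥E)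
    simp only [Nat.card_eq_fintype_card]
    exact Fintype.card_subtype_lt (x := (⊥ : IntermediateField K ↥E)) (by simp)
  omega
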